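/- arXiv:1403.7983 — 3 statements merged into one kernel-verified Lean document; each statement's English description precedes it below -/
import Mathlib

section
/- Let r ∈ ℕ. Let S be a piecewise polynomial function of degree ≤ r on [-1,1] with its only breakpoint at 0, with polynomial pieces p_1 := S|_{[-1,0)} and p_2 := S|_{(0,1]} (each extended polynomially). If S is nonnegative on [-1,1], then there exists an interval I with I ⊂ [-1,0] or I ⊂ [0,1], of length |I| ≥ 1/(4r²), such that S(x) ≥ c_1(r) ‖p_1 − p_2‖_{L_∞[-1,1]} for all x ∈ I, where c_1(r) > 0 depends only on r. -/
open MeasureTheory Set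
open scoped ENNReal NNReal Classical

noncomputable section

/-- Extended knot indexing: `z j` for `j ≤ n`, `z n` for `j > n`. -/
def zext (z : ℕ → ℝ) (n j : ℕ) : ℝ := z (min j n)

/-- `z` is a partition of `[a, b]` into `n` subintervals. -/
def IsPartitionOn (z : ℕ → ℝ) (n : ℕ) (a b : ℝ) : Prop :=
  z 0 = a ∧ z n = b ∧ ∀ i < n, z i < z (i + 1)

/-- `z` is a partition of `[-1, 1]` into `n` subintervals. -/
def IsPartition (z : ℕ → ℝ) (n : ℕ) : Prop := IsPartitionOn z n (-1) 1

/-- `s` is a piecewise polynomial function of degree `≤ r` with knots `z 0, …, z n`. -/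
def IsPPF (r : ℕ) (z : ℕ → ℝ) (n : ℕ) (s : ℝ → ℝ) : Prop :=
  ∀ i < n, ∃ P : Polynomial ℝ, P.degree ≤ (r : WithBot ℕ) ∧
    ∀ x ∈ Set.Ioo (z i) (z (i + 1)), s x = P.eval x

/-- Divided differences of `f` at the points `t 0, …, t q`. -/
def divDiff (f : ℝ → ℝ) : ℕ → (ℕ → ℝ) → ℝ
  | 0, t => f (t 0)
  | q + 1, t => (divDiff f q (fun i => t (i + 1)) - divDiff f q t) / (t (q + 1) - t 0)

/-- `f` is `q`-monotone on `J`: all divided differences of order `q` at points of `J`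
are nonnegative. -/
def QMonotoneOn (q : ℕ) (f : ℝ → ℝ) (J : Set ℝ) : Prop :=
  ∀ t : ℕ → ℝ, StrictMono t → (∀ i, i ≤ q → t i ∈ J) → 0 ≤ divDiff f q t

/-- The symmetric `k`-th difference of `f` with step `h`, set to `0` when the nodes leave `J`. -/
def symmDiffk (f : ℝ → ℝ) (k : ℕ) (h : ℝ) (J : Set ℝ) (x : ℝ) : ℝ :=
  if x - k * h / 2 ∈ J ∧ x + k * h / 2 ∈ J then
    ∑ i ∈ Finset.range (k + 1), (-1 : ℝ) ^ (k - i) * (k.choose i : ℝ) * f (x - k * h / 2 + i * h)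
  else 0

/-- `ω_k(f, t, J)_p`, the `k`-th modulus of smoothness of `f` on `J` in `L_p`. -/
def modulus (k : ℕ) (f : ℝ → ℝ) (t : ℝ) (J : Set ℝ) (p : ℝ≥0∞) : ℝ≥0∞ :=
  ⨆ h ∈ Set.Ioc (0 : ℝ) t, eLpNorm (symmDiffk f k h J) p (volume.restrict J)

/-- `ω_k(f, [a,b])_p := ω_k(f, b - a, [a,b])_p`. -/
def modulusIcc (k : ℕ) (f : ℝ → ℝ) (a b : ℝ) (p : ℝ≥0∞) : ℝ≥0∞ :=
  modulus k f (b - a) (Set.Icc a b) p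

/-- `zt` (a partition of `[-1,1]` into `m` pieces) is a `δ`-remesh of `z`. -/
def IsRemesh (δ : ℝ) (z : ℕ → ℝ) (n : ℕ) (zt : ℕ → ℝ) (m : ℕ) : Prop :=
  ∀ j < n, ∀ i < m,
    (Set.Icc (zt i) (zt (i + 1)) ∩ Set.Ioo (z j) (z (j + 1))).Nonempty →
      ∀ ν : ℕ, j - 1 ≤ ν → ν ≤ j + 1 → ν < n →
        zt (i + 1) - zt i ≤ δ * (z (ν + 1) - z ν)

/-- Left endpoint of `𝒥_j = [(z_{j-1}+z_j)/2, (z_j+z_{j+1})/2]`. -/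
def JcalL (z : ℕ → ℝ) (n j : ℕ) : ℝ := (zext z n (j - 1) + zext z n j) / 2

/-- Right endpoint of `𝒥_j = [(z_{j-1}+z_j)/2, (z_j+z_{j+1})/2]`. -/
def JcalR (z : ℕ → ℝ) (n j : ℕ) : ℝ := (zext z n j + zext z n (j + 1)) / 2

/-- The scale `max_{0≤j≤n-1} max(|J_{j+1}|/|J_j|, |J_{j-1}|/|J_j|)` of a partition. -/
def scaleP (z : ℕ → ℝ) (n : ℕ) : ℝ :=
  sSup ((fun j => max ((zext z n (j + 2) - z (j + 1)) / (z (j + 1) - z j))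
      ((z j - z (j - 1)) / (z (j + 1) - z j))) '' Set.Iio n)

/-- The uniform partition `U_n`. -/
def uniformP (n j : ℕ) : ℝ := -1 + 2 * (j : ℝ) / n

/-- The Chebyshev partition `Ch_n`. -/
def chebP (n j : ℕ) : ℝ := -Real.cos ((j : ℝ) * Real.pi / n)

/-- `φ(x) = √(1 - x²)`. -/
def phiDT (x : ℝ) : ℝ := Real.sqrt (1 - x ^ 2)

/-- The Ditzian–Totik modulus of smoothness `ω_k^φ(f, t)_p` on `[-1,1]`. -/
def modulusDT (k : ℕ) (f : ℝ → ℝ) (t : ℝ) (p : ℝ≥0∞) : ℝ≥0∞ :=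
  ⨆ h ∈ Set.Ioc (0 : ℝ) t,
    eLpNorm (fun x => symmDiffk f k (h * phiDT x) (Set.Icc (-1) 1) x) p
      (volume.restrict (Set.Icc (-1 : ℝ) 1))

/-- `f ∈ W_p^ν[a,b]` with `g = f^{(ν)}`:  for `ν ≥ 1`, `f ∈ C^{ν-1}`, `f^{(ν-1)}` is absolutely
continuous with a.e. derivative `g ∈ L_p`; for `ν = 0` it is just `f ∈ L_p` and `g = f`. -/
def MemSobolevWith (p : ℝ≥0∞) (ν : ℕ) (f g : ℝ → ℝ) (a b : ℝ) : Prop :=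
  if ν = 0 then MemLp f p (volume.restrict (Set.Icc a b)) ∧ g = f
  else ContDiffOn ℝ (ν - 1 : ℕ) f (Set.Icc a b) ∧
    MemLp g p (volume.restrict (Set.Icc a b)) ∧
    ∀ x ∈ Set.Icc a b, iteratedDerivWithin (ν - 1) f (Set.Icc a b) x =
      iteratedDerivWithin (ν - 1) f (Set.Icc a b) a + ∫ t in a..x, g t

/-- Splines of degree `≤ r` of minimal defect (`C^{r-1}[-1,1]`) with knots `z 0, …, z n`. -/
def SplineMD (r : ℕ) (z : ℕ → ℝ) (n : ℕ) : Set (ℝ → ℝ) :=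
  {u | IsPPF r z n u ∧ ContDiffOn ℝ (r - 1 : ℕ) u (Set.Icc (-1) 1)}

end

/-!
Lagrange interpolation at `r + 1` nodes that are pairwise at least `L` apart bounds a polynomial
of degree `≤ r` at any point within distance `D` of the nodes by `(r + 1) (D / L) ^ r` times its
largest value at the nodes. Let `y₀` be a point where `|p₁ - p₂|` attains its maximum `M` on
`[-1, 1]`; one of `|p₁(y₀)|`, `|p₂(y₀)|` is at least `M / 2`. Lay `r + 1` windows of length
`L = 1 / (4 r²)`, separated by gaps of length `L`, inside that polynomial's half of `[-1, 1]`,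
where it agrees with `S` and so is nonnegative. If each window contained a point where the
polynomial is below `c₁ M`, with `c₁ = 1 / (4 (r + 1) (2 / L) ^ r)`, interpolating at these points
would bound its value at `y₀` by `M / 4`; so one window is the required interval.
-/

open Polynomial

namespace Polynomial

variable {ι : Type*} [DecidableEq ι] {s : Finset ι} {v : ι → ℝ} {g D x : ℝ}

theorem abs_eval_lagrangeBasis_le (hg : 0 < g)
    (hsep : ∀ i ∈ s, ∀ j ∈ s, i ≠ j → g ≤ |v i - v j|) (hD : ∀ i ∈ s, |x - v i| ≤ D)
    {i : ι} (hi : i ∈ s) :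
    |(Lagrange.basis s v i).eval x| ≤ (D / g) ^ (s.card - 1) := by
  rw [Lagrange.basis, eval_prod, Finset.abs_prod, ← Finset.card_erase_of_mem hi,
    ← Finset.prod_const]
  refine Finset.prod_le_prod (fun _ _ => abs_nonneg _) fun j hj => ?_
  obtain ⟨hji, hj⟩ := Finset.mem_erase.mp hj
  rw [Lagrange.basisDivisor, eval_mul, eval_C, eval_sub, eval_X, eval_C, abs_mul, abs_inv,
    inv_mul_eq_div]
  exact div_le_div₀ ((abs_nonneg _).trans (hD j hj)) (hD j hj) hg (hsep i hi j hj (Ne.symm hji))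

theorem abs_eval_le_of_separated {p : ℝ[X]} (hp : p.degree < s.card) (hg : 0 < g)
    (hsep : ∀ i ∈ s, ∀ j ∈ s, i ≠ j → g ≤ |v i - v j|) (hD : ∀ i ∈ s, |x - v i| ≤ D)
    {B : ℝ} (hB : ∀ i ∈ s, |p.eval (v i)| ≤ B) :
    |p.eval x| ≤ s.card * (D / g) ^ (s.card - 1) * B := by
  have hinj : Set.InjOn v s := fun i hi j hj hvij => by
    by_contra hij
    have := hsep i hi j hj hij
    rw [hvij, sub_self, abs_zero] at this
    exact hg.not_ge this
  rw [Lagrange.eq_interpolate hinj hp, Lagrange.interpolate_apply, eval_finsetSum]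
  calc |∑ i ∈ s, eval x (C (p.eval (v i)) * Lagrange.basis s v i)|
      ≤ ∑ i ∈ s, B * (D / g) ^ (s.card - 1) := by
        refine (Finset.abs_sum_le_sum_abs _ _).trans (Finset.sum_le_sum fun i hi => ?_)
        rw [eval_mul, eval_C, abs_mul]
        exact mul_le_mul (hB i hi) (abs_eval_lagrangeBasis_le hg hsep hD hi) (abs_nonneg _)
          ((abs_nonneg _).trans (hB i hi))
    _ = s.card * (D / g) ^ (s.card - 1) * B := by
        rw [Finset.sum_const, nsmul_eq_mul]; ring

theorem exists_Icc_le_eval_of_nonneg {r : ℕ} {p : ℝ[X]} (hp : p.degree ≤ r) {a L c : ℝ}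
    (hL : 0 < L) (hnonneg : ∀ y ∈ Icc a (a + (2 * r + 1) * L), 0 ≤ p.eval y)
    (hD : ∀ y ∈ Icc a (a + (2 * r + 1) * L), |x - y| ≤ D)
    (hlarge : (r + 1) * (D / L) ^ r * c < |p.eval x|) :
    ∃ b, Icc b (b + L) ⊆ Icc a (a + (2 * r + 1) * L) ∧ ∀ y ∈ Icc b (b + L), c ≤ p.eval y := by
  by_contra! hsmall
  have window_sub : ∀ j ∈ Finset.range (r + 1),
      Icc (a + 2 * j * L) (a + 2 * j * L + L) ⊆ Icc a (a + (2 * r + 1) * L) := by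
    intro j hj
    have hjr : (j : ℝ) ≤ r := by exact_mod_cast Finset.mem_range_succ_iff.mp hj
    exact Icc_subset_Icc (le_add_of_nonneg_right (by positivity)) (by nlinarith)
  choose! y hy hyc using fun j (hj : j ∈ Finset.range (r + 1)) =>
    hsmall _ (window_sub j hj)
  have gap : ∀ j ∈ Finset.range (r + 1), ∀ k ∈ Finset.range (r + 1), j < k →
      L ≤ y k - y j := by
    intro j hj k hk hjk
    have : (j : ℝ) + 1 ≤ k := by exact_mod_cast hjk
    nlinarith [(hy j hj).2, (hy k hk).1]
  have hsep : ∀ j ∈ Finset.range (r + 1), ∀ k ∈ Finset.range (r + 1), j ≠ k →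
      L ≤ |y j - y k| := by
    intro j hj k hk hjk
    rcases hjk.lt_or_gt with h | h
    · exact (gap j hj k hk h).trans (abs_sub_comm (y j) (y k) ▸ le_abs_self _)
    · exact (gap k hk j hj h).trans (le_abs_self _)
  have hdeg : p.degree < (Finset.range (r + 1)).card := by
    rw [Finset.card_range]; exact hp.trans_lt (by exact_mod_cast r.lt_succ_self)
  have hbound := abs_eval_le_of_separated hdeg hL hsep
    (fun j hj => hD _ (window_sub j hj (hy j hj)))
    (fun j hj => (abs_of_nonneg (hnonneg _ (window_sub j hj (hy j hj)))).trans_le (hyc j hj).le)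
  simp only [Finset.card_range, Nat.add_sub_cancel, Nat.cast_add, Nat.cast_one] at hbound
  exact hlarge.not_ge hbound

end Polynomial

theorem exists_Icc_le_of_eqOn_eval {r : ℕ} {p : ℝ[X]} (hp : p.degree ≤ r) {S : ℝ → ℝ}
    {J : Set ℝ} (hSp : ∀ y ∈ J, S y = p.eval y) (hS : ∀ y ∈ Icc (-1 : ℝ) 1, 0 ≤ S y)
    {a L c x : ℝ} (hL : 0 < L) (haJ : Icc a (a + (2 * r + 1) * L) ⊆ J) (hJ : J ⊆ Icc (-1) 1)
    (hx : x ∈ Icc (-1 : ℝ) 1) (hlarge : (r + 1) * (2 / L) ^ r * c < |p.eval x|) :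
    ∃ b, Icc b (b + L) ⊆ J ∧ ∀ y ∈ Icc b (b + L), c ≤ S y := by
  have hnonneg : ∀ y ∈ Icc a (a + (2 * r + 1) * L), 0 ≤ p.eval y := fun y hy =>
    hSp y (haJ hy) ▸ hS y (hJ (haJ hy))
  have hD : ∀ y ∈ Icc a (a + (2 * r + 1) * L), |x - y| ≤ 2 := fun y hy => by
    simpa [Real.dist_eq, one_add_one_eq_two] using Real.dist_le_of_mem_Icc hx (hJ (haJ hy))
  obtain ⟨b, hb, hbig⟩ := exists_Icc_le_eval_of_nonneg hp hL hnonneg hD hlarge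
  exact ⟨b, hb.trans haJ, fun y hy => hSp y (haJ (hb hy)) ▸ hbig y hy⟩

/-- Lemma 3.3: a nonnegative ppf with one breakpoint is large on a long
interval lying on one side of the breakpoint. -/
theorem statement10 (r : ℕ) (hr : 1 ≤ r) :
    ∃ c1 : ℝ, 0 < c1 ∧
      ∀ (S : ℝ → ℝ) (p1 p2 : Polynomial ℝ),
        p1.degree ≤ (r : WithBot ℕ) → p2.degree ≤ (r : WithBot ℕ) →
        (∀ x ∈ Set.Ico (-1 : ℝ) 0, S x = p1.eval x) →
        (∀ x ∈ Set.Ioc (0 : ℝ) 1, S x = p2.eval x) →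
        (∀ x ∈ Set.Icc (-1 : ℝ) 1, 0 ≤ S x) →
        ∃ a b : ℝ, a < b ∧ 1 / (4 * (r : ℝ) ^ 2) ≤ b - a ∧
          (Set.Icc a b ⊆ Set.Icc (-1) 0 ∨ Set.Icc a b ⊆ Set.Icc 0 1) ∧
          ∀ x ∈ Set.Icc a b,
            c1 * sSup ((fun y => |p1.eval y - p2.eval y|) '' Set.Icc (-1 : ℝ) 1) ≤ S x := by
  set L : ℝ := 1 / (4 * (r : ℝ) ^ 2)
  set K : ℝ := (r + 1) * (2 / L) ^ r
  have hL : 0 < L := by positivity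
  have hK : 0 < K := by positivity
  have hlen : (2 * r + 1) * L < 1 := by
    have : (1 : ℝ) ≤ r := by exact_mod_cast hr
    rw [mul_one_div, div_lt_one (by positivity)]
    nlinarith
  refine ⟨1 / (4 * K), by positivity, fun S p1 p2 hd1 hd2 hS1 hS2 hS => ?_⟩
  obtain ⟨y0, hy0, hM⟩ := (isCompact_Icc.image (by fun_prop)).sSup_mem
    ((nonempty_Icc.mpr (by norm_num : (-1 : ℝ) ≤ 1)).image
      (fun y => |p1.eval y - p2.eval y|))
  beta_reduce at hM
  rw [← hM]
  set M := |p1.eval y0 - p2.eval y0|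
  rcases (abs_nonneg (p1.eval y0 - p2.eval y0)).eq_or_lt with hM0 | hMpos
  · refine ⟨-1, -1 + L, by linarith, by simp, Or.inl (Icc_subset_Icc le_rfl (by nlinarith)),
      fun x hx => ?_⟩
    rw [show M = 0 from hM0.symm, mul_zero]
    exact hS x ⟨hx.1, by nlinarith [hx.2]⟩
  have hlarge : ∀ q : ℝ[X], M / 2 ≤ |q.eval y0| → K * (1 / (4 * K) * M) < |q.eval y0| :=
    fun q hq => by field_simp; linarith
  rcases le_or_gt (M / 2) |p1.eval y0| with h1 | h2
  · obtain ⟨b, hb, hbig⟩ := exists_Icc_le_of_eqOn_eval hd1 hS1 hS (a := -1) hL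
      (fun y hy => ⟨hy.1, by linarith [hy.2]⟩) (fun y hy => ⟨hy.1, by linarith [hy.2]⟩)
      hy0 (hlarge p1 h1)
    exact ⟨b, b + L, lt_add_of_pos_right b hL, (add_sub_cancel_left b L).ge,
      Or.inl (hb.trans Ico_subset_Icc_self), hbig⟩
  · obtain ⟨b, hb, hbig⟩ := exists_Icc_le_of_eqOn_eval hd2 hS2 hS
      (a := 1 - (2 * r + 1) * L) hL (fun y hy => ⟨by linarith [hy.1], by linarith [hy.2]⟩)
      (fun y hy => ⟨by linarith [hy.1], hy.2⟩) hy0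
      (hlarge p2 (by linarith [abs_sub (p1.eval y0) (p2.eval y0)]))
    exact ⟨b, b + L, lt_add_of_pos_right b hL, (add_sub_cancel_left b L).ge,
      Or.inr (hb.trans Ioc_subset_Icc_self), hbig⟩
end

section
/- Let r ∈ ℕ_0 and let a = z_0 < z_1 < z_2 = b. Let s be a nondecreasing piecewise polynomial function of degree ≤ r + 1 on [a,b] with the only interior knot z_1. Then there exists a nondecreasing piecewise polynomial function s̃ of degree ≤ r + 1 with knots z_0, z_1, z_2, continuous on [a,b], such that ‖s − s̃‖_{L_p[a,b]} ≤ c(p, r, scale(z)) ω_{r+2}(s, [a,b])_p for all 0 < p ≤ ∞; moreover s̃(a) = s(a) and s̃(b) = s(b). -/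
open MeasureTheory Set
open scoped ENNReal NNReal Classical

/-!
Monotonicity of `s` makes the jump `J = P₁(z₁) - P₀(z₁)` nonnegative. Adding
`J ((x - a) / (z₁ - a)) ^ (r + 1)` to `P₀` on `[a, z₁]` closes the jump, keeps monotonicity and
the value at `a`, and moves `s` by at most `J`; hence `‖s - s̃‖_p ≤ (b - a) ^ (1/p) J`.

Conversely let `d = min (z₁ - a) (b - z₁)` and `h = d / (r + 2)`. For `x` in an interval of
length `h` just left of `z₁ - d / 2`, all nodes of `Δ_h^{r+2} s (x)` but the last lie on the piece
`P₀`, which the difference annihilates, so `Δ_h^{r+2} s (x) = G(x)` for a polynomial `G` of degree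
`≤ r + 1` equal to `J` at the left end of that interval. A Remez-type estimate, obtained from
Lagrange interpolation at well-separated nodes, gives `|G| ≥ c J` on a set of measure `≥ c h`, so
`ω_{r+2}(s, [a, b])_p ≥ c J h ^ (1/p)`, and `b - a ≤ (1 + scale) d` finishes the comparison.
-/

open Polynomial

theorem le_of_mem_closure_of_forall_le {α β : Type*} [TopologicalSpace α] [TopologicalSpace β]
    [Preorder β] [OrderClosedTopology β] {f g : α → β} (hf : Continuous f) (hg : Continuous g)
    {A B : Set α} {x y : α} (hx : x ∈ closure A) (hy : y ∈ closure B)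
    (h : ∀ t ∈ A, ∀ u ∈ B, f t ≤ g u) : f x ≤ g y := by
  have hsub : closure (A ×ˢ B) ⊆ {q : α × α | f q.1 ≤ g q.2} :=
    (isClosed_le (hf.comp continuous_fst) (hg.comp continuous_snd)).closure_subset_iff.2
      fun q hq => h _ hq.1 _ hq.2
  have hxy : (x, y) ∈ closure (A ×ˢ B) := by rw [closure_prod_eq]; exact ⟨hx, hy⟩
  exact hsub hxy

theorem MonotoneOn.Icc_of_Ioo {f : ℝ → ℝ} (hf : Continuous f) {a b : ℝ}
    (h : MonotoneOn f (Ioo a b)) : MonotoneOn f (Icc a b) := by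
  intro x hx y hy hxy
  rcases hxy.eq_or_lt with rfl | hlt
  · exact le_rfl
  have hm : x < (x + y) / 2 ∧ (x + y) / 2 < y := ⟨by linarith, by linarith⟩
  refine le_of_mem_closure_of_forall_le hf hf (A := Ioo x ((x + y) / 2))
    (B := Ioo ((x + y) / 2) y) ?_ ?_ fun t ht u hu => ?_
  · rw [closure_Ioo hm.1.ne]; exact left_mem_Icc.2 hm.1.le
  · rw [closure_Ioo hm.2.ne]; exact right_mem_Icc.2 hm.2.le
  · exact h ⟨hx.1.trans_lt ht.1, ht.2.trans (hm.2.trans_le hy.2)⟩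
      ⟨hx.1.trans_lt (hm.1.trans hu.1), hu.2.trans_le hy.2⟩ (ht.2.trans hu.1).le

namespace Polynomial

noncomputable def bumpToValue (P : ℝ[X]) (a c v : ℝ) (n : ℕ) : ℝ[X] :=
  P + C ((v - P.eval c) / (c - a) ^ n) * (X - C a) ^ n

variable {P : ℝ[X]} {a c v : ℝ} {n : ℕ}

theorem eval_bumpToValue (x : ℝ) :
    (P.bumpToValue a c v n).eval x = P.eval x + (v - P.eval c) * ((x - a) / (c - a)) ^ n := by
  simp only [bumpToValue, eval_add, eval_mul, eval_C, eval_pow, eval_sub, eval_X, div_pow]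
  ring

theorem bumpToValue_eval_right (hac : a ≠ c) : (P.bumpToValue a c v n).eval c = v := by
  rw [eval_bumpToValue, div_self (sub_ne_zero.2 hac.symm), one_pow]
  ring

theorem bumpToValue_eval_left (hn : n ≠ 0) : (P.bumpToValue a c v n).eval a = P.eval a := by
  simp [eval_bumpToValue, hn]

theorem degree_bumpToValue_le (hP : P.degree ≤ n) : (P.bumpToValue a c v n).degree ≤ n := by
  refine (degree_add_le _ _).trans (max_le hP ?_)
  refine (degree_mul_le _ _).trans ?_
  calc (C ((v - P.eval c) / (c - a) ^ n)).degree + ((X - C a) ^ n).degree ≤ 0 + n := by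
        gcongr
        · exact degree_C_le
        · exact (degree_pow_le _ _).trans (by simp)
    _ = n := zero_add _

theorem bumpToValue_sub_mem_Icc {x : ℝ} (hx : x ∈ Icc a c) (hv : P.eval c ≤ v) :
    (P.bumpToValue a c v n).eval x - P.eval x ∈ Icc 0 (v - P.eval c) := by
  rw [eval_bumpToValue, add_sub_cancel_left]
  rcases hx.1.eq_or_lt with rfl | hax
  · rcases n.eq_zero_or_pos with rfl | hn
    · simpa using hv
    · simp [zero_pow hn.ne', sub_nonneg.2 hv]
  have hq : 0 ≤ (x - a) / (c - a) ∧ (x - a) / (c - a) ≤ 1 :=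
    ⟨div_nonneg (by linarith) (by linarith [hx.2]),
      (div_le_one (by linarith [hx.2])).2 (by linarith [hx.2])⟩
  exact ⟨mul_nonneg (sub_nonneg.2 hv) (pow_nonneg hq.1 n),
    mul_le_of_le_one_right (sub_nonneg.2 hv) (pow_le_one₀ hq.1 hq.2)⟩

theorem monotoneOn_bumpToValue (hac : a < c) (hP : MonotoneOn P.eval (Icc a c))
    (hv : P.eval c ≤ v) : MonotoneOn (P.bumpToValue a c v n).eval (Icc a c) := by
  have hbump : MonotoneOn (fun x => (v - P.eval c) * ((x - a) / (c - a)) ^ n) (Icc a c) :=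
    fun x hx y _ hxy => mul_le_mul_of_nonneg_left (pow_le_pow_left₀
      (div_nonneg (by linarith [hx.1]) (by linarith)) (by gcongr) n) (sub_nonneg.2 hv)
  exact (hP.add hbump).congr fun x _ => (eval_bumpToValue x).symm

end Polynomial

theorem Polynomial.sum_range_alternating_choose_mul_eval_eq_zero {P : ℝ[X]} {k : ℕ}
    (hP : P.natDegree < k) (y h : ℝ) :
    ∑ i ∈ Finset.range (k + 1), (-1 : ℝ) ^ (k - i) * (k.choose i : ℝ) * P.eval (y + i * h) = 0 := by
  set Q := P.comp (C h * X + C y)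
  have hQ : Q.natDegree < k := calc
    Q.natDegree ≤ P.natDegree * 1 :=
      natDegree_comp_le.trans (Nat.mul_le_mul_left _ natDegree_linear_le)
    _ < k := by rwa [mul_one]
  have h0 := congr_fun (fwdDiff_iter_eq_zero_of_degree_lt hQ) 0
  rw [fwdDiff_iter_eq_sum_shift, Pi.zero_apply] at h0
  rw [← h0]
  refine Finset.sum_congr rfl fun i _ => ?_
  simp only [Q, eval_comp, eval_add, eval_mul, eval_C, eval_X, zero_add, nsmul_eq_mul, mul_one,
    zsmul_eq_mul]
  push_cast
  ring_nf

theorem symmDiffk_eq_sub_eval {f : ℝ → ℝ} {k : ℕ} {h x : ℝ} {J : Set ℝ} {P : ℝ[X]}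
    (hP : P.natDegree < k) (hJ : x - k * h / 2 ∈ J ∧ x + k * h / 2 ∈ J)
    (hf : ∀ i < k, f (x - k * h / 2 + i * h) = P.eval (x - k * h / 2 + i * h)) :
    symmDiffk f k h J x = f (x + k * h / 2) - P.eval (x + k * h / 2) := by
  have hend : x - k * h / 2 + k * h = x + k * h / 2 := by ring
  have hsum := sum_range_alternating_choose_mul_eval_eq_zero hP (x - k * h / 2) h
  rw [symmDiffk, if_pos hJ, Finset.sum_range_succ,
    Finset.sum_congr rfl fun i hi => by rw [hf i (Finset.mem_range.1 hi)]]
  rw [Finset.sum_range_succ] at hsum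
  simp only [Nat.sub_self, pow_zero, Nat.choose_self, Nat.cast_one, one_mul, hend] at hsum ⊢
  linarith

theorem Polynomial.abs_eval_le_of_abs_eval_nodes_le {D : ℕ} {G : ℝ[X]} (hG : G.natDegree ≤ D)
    {t : Fin (D + 1) → ℝ} {η R M w : ℝ} (hη : 0 < η) (hsep : ∀ i j, i ≠ j → η ≤ |t i - t j|)
    (hw : ∀ j, |w - t j| ≤ R) (hM : ∀ i, |G.eval (t i)| ≤ M) :
    |G.eval w| ≤ (D + 1) * M * (R / η) ^ D := by
  have hinj : Set.InjOn t (Finset.univ : Finset (Fin (D + 1))) := fun i _ j _ hij => by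
    by_contra hne
    have := hsep i j hne
    rw [hij, sub_self, abs_zero] at this
    exact hη.not_ge this
  have hdeg : G.degree < (Finset.univ : Finset (Fin (D + 1))).card := by
    rw [Finset.card_univ, Fintype.card_fin]
    exact degree_le_natDegree.trans_lt (by exact_mod_cast Nat.lt_succ_of_le hG)
  have hbasis : ∀ i, |(Lagrange.basis Finset.univ t i).eval w| ≤ (R / η) ^ D := by
    intro i
    rw [Lagrange.basis, eval_prod, Finset.abs_prod]
    calc ∏ j ∈ Finset.univ.erase i, |(Lagrange.basisDivisor (t i) (t j)).eval w|
        ≤ ∏ _j ∈ Finset.univ.erase i, R / η := by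
          refine Finset.prod_le_prod (fun _ _ => abs_nonneg _) fun j hj => ?_
          have hsep' := hsep i j (Finset.ne_of_mem_erase hj).symm
          simp only [Lagrange.basisDivisor, eval_mul, eval_C, eval_sub, eval_X, abs_mul, abs_inv]
          rw [inv_mul_eq_div]
          exact div_le_div₀ ((abs_nonneg _).trans (hw j)) (hw j) hη hsep'
      _ = (R / η) ^ D := by simp [div_pow]
  calc |G.eval w|
      = |∑ i, G.eval (t i) * (Lagrange.basis Finset.univ t i).eval w| := by
        conv_lhs => rw [Lagrange.eq_interpolate hinj hdeg]
        simp [Lagrange.interpolate_apply, eval_finsetSum]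
    _ ≤ ∑ i, |G.eval (t i)| * |(Lagrange.basis Finset.univ t i).eval w| := by
        simp_rw [← abs_mul]
        exact Finset.abs_sum_le_sum_abs _ _
    _ ≤ ∑ _i : Fin (D + 1), M * (R / η) ^ D :=
        Finset.sum_le_sum fun i _ => mul_le_mul (hM i) (hbasis i) (abs_nonneg _)
          ((abs_nonneg _).trans (hM i))
    _ = (D + 1) * M * (R / η) ^ D := by
        simp only [Finset.sum_const, Finset.card_univ, Fintype.card_fin, nsmul_eq_mul,
          Nat.cast_add, Nat.cast_one]
        ring

theorem Polynomial.ofReal_le_volume_abs_eval_ge {D : ℕ} {G : ℝ[X]} (hG : G.natDegree ≤ D)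
    (w : ℝ) {h : ℝ} (hh : 0 < h) :
    ENNReal.ofReal (h / (2 * D + 2)) ≤
      volume {x ∈ Icc w (w + h) | |G.eval w| / (2 * D + 2) ^ (D + 1) ≤ |G.eval x|} := by
  set κ : ℝ := 2 * D + 2
  have hκ0 : 0 < κ := by positivity
  set η := h / κ
  have hη : 0 < η := by positivity
  have hκη : κ * η = h := mul_div_cancel₀ h hκ0.ne'
  -- Otherwise each of the `D + 1` intervals `[w + 2iη, w + 2iη + η]` contains a point where
  -- `|G|` is small, and Lagrange interpolation at these `η`-separated points bounds `|G w|` by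
  -- half of itself.
  by_contra! hA
  have hpt : ∀ i : Fin (D + 1), ∃ x ∈ Icc (w + 2 * i * η) (w + 2 * i * η + η),
      x ∉ {x ∈ Icc w (w + h) | |G.eval w| / κ ^ (D + 1) ≤ |G.eval x|} := by
    intro i
    by_contra! hsub
    have hle := measure_mono (μ := volume) hsub
    rw [Real.volume_Icc, add_sub_cancel_left] at hle
    exact (hle.trans_lt hA).false
  choose t ht htA using hpt
  have htI : ∀ i, t i ∈ Icc w (w + h) := fun i => by
    have hi : (i : ℝ) ≤ D := by exact_mod_cast Nat.lt_succ_iff.mp i.isLt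
    constructor <;> nlinarith [(ht i).1, (ht i).2]
  have hsmall : ∀ i, |G.eval (t i)| < |G.eval w| / κ ^ (D + 1) := fun i => by
    by_contra! hge
    exact htA i ⟨htI i, hge⟩
  have hsep : ∀ i j, i ≠ j → η ≤ |t i - t j| := by
    have hlt : ∀ i j : Fin (D + 1), i < j → η ≤ t j - t i := fun i j hij => by
      have : (i : ℝ) + 1 ≤ j := by exact_mod_cast hij
      nlinarith [(ht i).2, (ht j).1]
    intro i j hne
    rcases hne.lt_or_gt with hij | hij
    · exact (hlt i j hij).trans (abs_sub_comm (t j) (t i) ▸ le_abs_self _)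
    · exact (hlt j i hij).trans (le_abs_self _)
  have hbound := abs_eval_le_of_abs_eval_nodes_le hG hη hsep (w := w) (R := h)
    (fun j => abs_le.2 ⟨by linarith [(htI j).2], by linarith [(htI j).1]⟩)
    fun i => (hsmall i).le
  have hhalf : ((D : ℝ) + 1) * (|G.eval w| / κ ^ (D + 1)) * (h / η) ^ D = |G.eval w| / 2 := by
    rw [show h / η = κ by rw [div_eq_iff hη.ne', hκη]]
    field_simp
    ring
  have hpos : 0 < |G.eval w| := by
    have := (abs_nonneg _).trans_lt (hsmall 0)
    exact (div_pos_iff_of_pos_right (by positivity)).1 this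
  linarith

theorem MeasureTheory.mul_rpow_le_eLpNorm_of_le_measure {α E : Type*} [MeasurableSpace α]
    [NormedAddCommGroup E] {μ : Measure α} {f : α → E} (hf : AEStronglyMeasurable f μ)
    {p : ℝ≥0∞} (hp : p ≠ 0) {c m : ℝ≥0∞} (hm0 : m ≠ 0) (hm : m ≤ μ {x | c ≤ ‖f x‖ₑ}) :
    c * m ^ p.toReal⁻¹ ≤ eLpNorm f p μ := by
  rcases eq_or_ne p ∞ with rfl | hp_top
  · simp only [ENNReal.toReal_top, inv_zero, ENNReal.rpow_zero, mul_one, eLpNorm_exponent_top]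
    by_contra! hlt
    exact hm0 (le_zero_iff.1 (hm.trans_eq
      (measure_mono_null (fun x hx => hlt.trans_le hx) meas_eLpNormEssSup_lt)))
  have hp' : p.toReal * p.toReal⁻¹ = 1 := mul_inv_cancel₀ (ENNReal.toReal_pos hp hp_top).ne'
  calc c * m ^ p.toReal⁻¹ ≤ (c ^ p.toReal * μ {x | c ≤ ‖f x‖ₑ}) ^ p.toReal⁻¹ := by
        rw [ENNReal.mul_rpow_of_nonneg _ _ (by positivity), ← ENNReal.rpow_mul, hp',
          ENNReal.rpow_one]
        gcongr
    _ ≤ (eLpNorm f p μ ^ p.toReal) ^ p.toReal⁻¹ := by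
        gcongr
        exact mul_meas_ge_le_pow_eLpNorm' μ hp hp_top hf c
    _ = eLpNorm f p μ := by rw [← ENNReal.rpow_mul, hp', ENNReal.rpow_one]

theorem Polynomial.ofReal_mul_rpow_le_eLpNorm_eval {D : ℕ} {G : ℝ[X]} (hG : G.natDegree ≤ D)
    (w : ℝ) {h : ℝ} (hh : 0 < h) {p : ℝ≥0∞} (hp : p ≠ 0) :
    ENNReal.ofReal (|G.eval w| / (2 * D + 2) ^ (D + 1)) *
        ENNReal.ofReal (h / (2 * D + 2)) ^ p.toReal⁻¹ ≤
      eLpNorm G.eval p (volume.restrict (Icc w (w + h))) := by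
  refine mul_rpow_le_eLpNorm_of_le_measure G.continuous.aestronglyMeasurable hp
    (ENNReal.ofReal_pos.2 (by positivity)).ne' ?_
  rw [Measure.restrict_apply' measurableSet_Icc]
  refine (ofReal_le_volume_abs_eval_ge hG w hh).trans (measure_mono fun x hx => ⟨?_, hx.1⟩)
  show _ ≤ ‖G.eval x‖ₑ
  rw [Real.enorm_eq_ofReal_abs]
  exact ENNReal.ofReal_le_ofReal hx.2

theorem sub_le_one_add_max_div_mul_min {a z b : ℝ} (haz : a < z) (hzb : z < b) :
    b - a ≤ (1 + max ((b - z) / (z - a)) ((z - a) / (b - z))) * min (z - a) (b - z) := by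
  have h₁ : 0 < z - a := by linarith
  have h₂ : 0 < b - z := by linarith
  rcases min_choice (z - a) (b - z) with hmin | hmin <;> rw [hmin]
  · have := mul_le_mul_of_nonneg_right
      (le_max_left ((b - z) / (z - a)) ((z - a) / (b - z))) h₁.le
    rw [div_mul_cancel₀ _ h₁.ne'] at this
    linarith
  · have := mul_le_mul_of_nonneg_right
      (le_max_right ((b - z) / (z - a)) ((z - a) / (b - z))) h₂.le
    rw [div_mul_cancel₀ _ h₂.ne'] at this
    linarith

theorem ENNReal.ofReal_rpow_mul_le {x y J K L e : ℝ} (hx : 0 ≤ x) (hy : 0 ≤ y) (hJ : 0 ≤ J)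
    (hK : 0 < K) (hL : 0 ≤ L) (he : 0 ≤ e) (hxy : x ≤ L * y) :
    ENNReal.ofReal x ^ e * ENNReal.ofReal J ≤
      ENNReal.ofReal (K * L ^ e) * (ENNReal.ofReal (J / K) * ENNReal.ofReal y ^ e) := by
  rw [ENNReal.ofReal_rpow_of_nonneg hx he, ENNReal.ofReal_rpow_of_nonneg hy he,
    ← ENNReal.ofReal_mul (by positivity), ← ENNReal.ofReal_mul (by positivity),
    ← ENNReal.ofReal_mul (by positivity)]
  refine ENNReal.ofReal_le_ofReal ?_
  calc x ^ e * J ≤ (L * y) ^ e * J := by gcongr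
    _ = K * L ^ e * (J / K * y ^ e) := by rw [Real.mul_rpow hL hy]; field_simp

section OneKnot

variable {s : ℝ → ℝ} {P₀ P₁ : ℝ[X]} {a z b : ℝ}

theorem eval_le_eval_of_monotoneOn (haz : a < z) (hzb : z < b)
    (hs₀ : ∀ x ∈ Ioo a z, s x = P₀.eval x) (hs₁ : ∀ x ∈ Ioo z b, s x = P₁.eval x)
    (hs : MonotoneOn s (Icc a b)) : P₀.eval z ≤ P₁.eval z := by
  refine le_of_mem_closure_of_forall_le P₀.continuous P₁.continuous (A := Ioo a z)
    (B := Ioo z b) ?_ ?_ fun t ht u hu => ?_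
  · rw [closure_Ioo haz.ne]; exact right_mem_Icc.2 haz.le
  · rw [closure_Ioo hzb.ne]; exact left_mem_Icc.2 hzb.le
  · rw [← hs₀ t ht, ← hs₁ u hu]
    exact hs ⟨ht.1.le, ht.2.le.trans hzb.le⟩ ⟨haz.le.trans hu.1.le, hu.2.le⟩ (ht.2.trans hu.1).le

theorem monotoneOn_eval_left (hs₀ : ∀ x ∈ Ioo a z, s x = P₀.eval x)
    (hs : MonotoneOn s (Icc a b)) (hzb : z ≤ b) : MonotoneOn P₀.eval (Icc a z) :=
  MonotoneOn.Icc_of_Ioo P₀.continuous <|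
    (hs.mono fun _ hx => ⟨hx.1.le, hx.2.le.trans hzb⟩).congr hs₀

theorem monotoneOn_eval_right (hs₁ : ∀ x ∈ Ioo z b, s x = P₁.eval x)
    (hs : MonotoneOn s (Icc a b)) (haz : a ≤ z) : MonotoneOn P₁.eval (Icc z b) :=
  MonotoneOn.Icc_of_Ioo P₁.continuous <|
    (hs.mono fun _ hx => ⟨haz.trans hx.1.le, hx.2.le⟩).congr hs₁

theorem monotoneOn_ite_le {f g : ℝ → ℝ} (haz : a ≤ z) (hzb : z ≤ b)
    (hf : MonotoneOn f (Icc a z)) (hg : MonotoneOn g (Icc z b)) (hfg : f z = g z) :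
    MonotoneOn (fun x => if x ≤ z then f x else g x) (Icc a b) := by
  rw [← Icc_union_Icc_eq_Icc haz hzb]
  refine MonotoneOn.union_right (hf.congr fun x hx => ?_) (hg.congr fun x hx => ?_)
    (isGreatest_Icc haz) (isLeast_Icc hzb)
  · simp [hx.2]
  · rcases hx.1.eq_or_lt with rfl | hzx
    · simp [hfg]
    · simp [not_le.2 hzx]

theorem eLpNorm_sub_ite_bumpToValue_le (hs₀ : ∀ x ∈ Ioo a z, s x = P₀.eval x)
    (hs₁ : ∀ x ∈ Ioo z b, s x = P₁.eval x) (hv : P₀.eval z ≤ P₁.eval z) (n : ℕ) (p : ℝ≥0∞) :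
    eLpNorm (fun x => s x - if x ≤ z then (P₀.bumpToValue a z (P₁.eval z) n).eval x
        else P₁.eval x) p (volume.restrict (Icc a b)) ≤
      ENNReal.ofReal (b - a) ^ p.toReal⁻¹ * ENNReal.ofReal (P₁.eval z - P₀.eval z) := by
  rw [← Measure.restrict_congr_set Ioo_ae_eq_Icc]
  have hbound : ∀ᵐ x ∂volume.restrict (Ioo a b), ‖s x - if x ≤ z then
      (P₀.bumpToValue a z (P₁.eval z) n).eval x else P₁.eval x‖ ≤ P₁.eval z - P₀.eval z := by
    filter_upwards [ae_restrict_mem measurableSet_Ioo,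
      ae_restrict_of_ae ((countable_singleton z).ae_notMem volume)] with x hx hxz
    rcases lt_or_gt_of_ne (show x ≠ z from hxz) with hxz | hzx
    · have h := P₀.bumpToValue_sub_mem_Icc (n := n) ⟨hx.1.le, hxz.le⟩ hv
      rw [if_pos hxz.le, hs₀ x ⟨hx.1, hxz⟩, Real.norm_eq_abs, abs_sub_comm, abs_of_nonneg h.1]
      exact h.2
    · rw [if_neg (not_le.2 hzx), hs₁ x ⟨hzx, hx.2⟩, sub_self, norm_zero]
      exact sub_nonneg.2 hv
  simpa using eLpNorm_le_of_ae_bound (p := p) hbound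

theorem ofReal_mul_rpow_le_modulusIcc {D : ℕ} (haz : a < z) (hzb : z < b)
    (hP₀ : P₀.natDegree ≤ D) (hP₁ : P₁.natDegree ≤ D)
    (hs₀ : ∀ x ∈ Ioo a z, s x = P₀.eval x) (hs₁ : ∀ x ∈ Ioo z b, s x = P₁.eval x)
    {p : ℝ≥0∞} (hp : p ≠ 0) :
    ENNReal.ofReal (|P₁.eval z - P₀.eval z| / (2 * D + 2) ^ (D + 1)) *
        ENNReal.ofReal (min (z - a) (b - z) / ((D + 1) * (2 * D + 2))) ^ p.toReal⁻¹ ≤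
      modulusIcc (D + 1) s a b p := by
  set d := min (z - a) (b - z)
  have hda : d ≤ z - a := min_le_left _ _
  have hdb : d ≤ b - z := min_le_right _ _
  have hd : 0 < d := lt_min (by linarith) (by linarith)
  set h := d / (D + 1)
  have hh : 0 < h := by positivity
  have hDh : ((D + 1 : ℕ) : ℝ) * h = d := by push_cast; exact mul_div_cancel₀ d (by positivity)
  have hhd : h ≤ d := div_le_self hd.le (by linarith [(D.cast_nonneg : (0 : ℝ) ≤ D)])
  set w := z - d / 2 with hw
  set G := (P₁ - P₀).comp (X + C (d / 2))
  have hG : G.natDegree ≤ D := by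
    rw [natDegree_comp, natDegree_X_add_C, mul_one]
    exact (natDegree_sub_le _ _).trans (max_le hP₁ hP₀)
  have hGw : G.eval w = P₁.eval z - P₀.eval z := by simp [G, w]
  -- For `y ∈ (w, w + h)` the nodes of `Δ_h^{D+1} s (y)` but the last lie in `(a, z)`, the last
  -- one, `y + d / 2`, in `(z, b)`.
  have hwindow : EqOn (symmDiffk s (D + 1) h (Icc a b)) G.eval (Ioo w (w + h)) := by
    intro y hy
    have hy₁ : z - d / 2 < y := hy.1
    have hy₂ : y < z - d / 2 + h := hy.2
    have hk : ((D + 1 : ℕ) : ℝ) * h / 2 = d / 2 := by rw [hDh]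
    have hnode : ∀ i < D + 1, y - ((D + 1 : ℕ) : ℝ) * h / 2 + i * h ∈ Ioo a z := by
      intro i hi
      have hiD : (i : ℝ) * h ≤ D * h := by gcongr; exact_mod_cast Nat.lt_succ_iff.mp hi
      have : (D : ℝ) * h + h = d := by rw [← hDh]; push_cast; ring
      rw [hk]
      constructor <;> nlinarith
    rw [symmDiffk_eq_sub_eval (P := P₀) (by omega)
      (by rw [hk]; constructor <;> constructor <;> linarith) fun i hi => hs₀ _ (hnode i hi), hk,
      hs₁ _ ⟨by linarith, by linarith⟩]
    simp [G]
  calc ENNReal.ofReal (|P₁.eval z - P₀.eval z| / (2 * D + 2) ^ (D + 1)) *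
        ENNReal.ofReal (d / ((D + 1) * (2 * D + 2))) ^ p.toReal⁻¹
      = ENNReal.ofReal (|G.eval w| / (2 * D + 2) ^ (D + 1)) *
          ENNReal.ofReal (h / (2 * D + 2)) ^ p.toReal⁻¹ := by rw [hGw, div_div]
    _ ≤ eLpNorm G.eval p (volume.restrict (Icc w (w + h))) :=
        ofReal_mul_rpow_le_eLpNorm_eval hG w hh hp
    _ = eLpNorm (symmDiffk s (D + 1) h (Icc a b)) p (volume.restrict (Ioo w (w + h))) := by
        rw [← Measure.restrict_congr_set Ioo_ae_eq_Icc]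
        exact (eLpNorm_congr_ae ((ae_restrict_mem measurableSet_Ioo).mono hwindow)).symm
    _ ≤ eLpNorm (symmDiffk s (D + 1) h (Icc a b)) p (volume.restrict (Icc a b)) :=
        eLpNorm_mono_measure _ (Measure.restrict_mono
          (Ioo_subset_Icc_self.trans (Icc_subset_Icc (by linarith) (by linarith))) le_rfl)
    _ ≤ modulusIcc (D + 1) s a b p :=
        le_iSup₂ (f := fun h _ => eLpNorm (symmDiffk s (D + 1) h (Icc a b)) p
          (volume.restrict (Icc a b))) h ⟨hh, by linarith⟩

end OneKnot

/-- Corollary 3.11: monotone smoothing, one interior knot. -/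
theorem statement18 (r : ℕ) :
    ∃ C : ℝ≥0∞ → ℝ → ℝ≥0,
      ∀ a z1 b : ℝ, a < z1 → z1 < b →
        ∀ (s : ℝ → ℝ) (P0 P1 : Polynomial ℝ),
          P0.degree ≤ ((r + 1 : ℕ) : WithBot ℕ) → P1.degree ≤ ((r + 1 : ℕ) : WithBot ℕ) →
          (∀ x ∈ Set.Ioo a z1, s x = P0.eval x) →
          (∀ x ∈ Set.Ioo z1 b, s x = P1.eval x) →
          MonotoneOn s (Set.Icc a b) →
          ∃ st : ℝ → ℝ,
            MonotoneOn st (Set.Icc a b) ∧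
            ContinuousOn st (Set.Icc a b) ∧
            (∃ Q0 Q1 : Polynomial ℝ, Q0.degree ≤ ((r + 1 : ℕ) : WithBot ℕ) ∧
              Q1.degree ≤ ((r + 1 : ℕ) : WithBot ℕ) ∧
              (∀ x ∈ Set.Ioo a z1, st x = Q0.eval x) ∧
              (∀ x ∈ Set.Ioo z1 b, st x = Q1.eval x)) ∧
            (∀ p : ℝ≥0∞, 0 < p →
              eLpNorm (fun x => s x - st x) p (volume.restrict (Set.Icc a b)) ≤
                C p (max ((b - z1) / (z1 - a)) ((z1 - a) / (b - z1))) *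
                  modulusIcc (r + 2) s a b p) ∧
            st a = P0.eval a ∧ st b = P1.eval b := by
  set K : ℝ := (2 * ((r + 1 : ℕ) : ℝ) + 2) ^ (r + 2)
  set M : ℝ := (((r + 1 : ℕ) : ℝ) + 1) * (2 * ((r + 1 : ℕ) : ℝ) + 2)
  refine ⟨fun p σ => (K * (M * (1 + max σ 0)) ^ p.toReal⁻¹).toNNReal,
    fun a z b haz hzb s P₀ P₁ hP₀ hP₁ hs₀ hs₁ hs => ?_⟩
  have hv := eval_le_eval_of_monotoneOn haz hzb hs₀ hs₁ hs
  set Q := P₀.bumpToValue a z (P₁.eval z) (r + 1)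
  have hQz : Q.eval z = P₁.eval z := bumpToValue_eval_right haz.ne
  refine ⟨fun x => if x ≤ z then Q.eval x else P₁.eval x,
    monotoneOn_ite_le haz.le hzb.le
      (monotoneOn_bumpToValue haz (monotoneOn_eval_left hs₀ hs hzb.le) hv)
      (monotoneOn_eval_right hs₁ hs haz.le) hQz,
    (Continuous.if_le Q.continuous P₁.continuous continuous_id continuous_const
      fun x (hx : x = z) => hx ▸ hQz).continuousOn,
    ⟨Q, P₁, degree_bumpToValue_le hP₀, hP₁, fun x hx => if_pos hx.2.le,
      fun x hx => if_neg (not_le.2 hx.1)⟩, fun p hp => ?_,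
    (if_pos haz.le).trans (bumpToValue_eval_left r.succ_ne_zero), if_neg (not_le.2 hzb)⟩
  set σ := max ((b - z) / (z - a)) ((z - a) / (b - z))
  have hσ : 0 ≤ σ := le_max_of_le_left (div_nonneg (by linarith) (by linarith))
  have hJ : 0 ≤ P₁.eval z - P₀.eval z := sub_nonneg.2 hv
  calc _ ≤ ENNReal.ofReal (b - a) ^ p.toReal⁻¹ * ENNReal.ofReal (P₁.eval z - P₀.eval z) :=
        eLpNorm_sub_ite_bumpToValue_le hs₀ hs₁ hv _ p
    _ ≤ ENNReal.ofReal (K * (M * (1 + max σ 0)) ^ p.toReal⁻¹) *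
          (ENNReal.ofReal (|P₁.eval z - P₀.eval z| / K) *
          ENNReal.ofReal (min (z - a) (b - z) / M) ^ p.toReal⁻¹) := by
        rw [abs_of_nonneg hJ, max_eq_left hσ]
        refine ENNReal.ofReal_rpow_mul_le (by linarith) (by positivity) hJ (by positivity)
          (by positivity) (by positivity) ?_
        have hM : M ≠ 0 := by positivity
        have hba : b - a ≤ (1 + σ) * min (z - a) (b - z) := sub_le_one_add_max_div_mul_min haz hzb
        refine hba.trans_eq ?_
        field_simp
    _ ≤ _ := mul_le_mul_right (ofReal_mul_rpow_le_modulusIcc haz hzb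
        (natDegree_le_iff_degree_le.2 hP₀) (natDegree_le_iff_degree_le.2 hP₁) hs₀ hs₁ hp.ne') _
end

section
/- Let δ > 0 and n, m ∈ ℕ. (i) If m ≥ n/δ, then the uniform partition U_m is a δ-remesh of U_n, i.e., U_m ∈ R_δ(U_n). (ii) If m ≥ max(25/δ, 1) · n, then the Chebyshev partition Ch_m is a δ-remesh of Ch_n, i.e., Ch_m ∈ R_δ(Ch_n). -/
open MeasureTheory Set
open scoped ENNReal NNReal Classical

/-!
Both partitions have explicit step lengths. For `U_N` every step is `2 / N`, so only `n ≤ δ m`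
is needed. For `Ch_N` the `k`-th step is `2 sin θ sin (π / 2N)` with `θ = (2k + 1)π / 2N`, and by
`sin x ≤ x` and Jordan's inequality it lies between `4 d(θ) / (π N)` and `π d(θ) / N`, where
`d(θ) = min θ (π - θ)`. If a step of `Ch_m` meets the `j`-th interval of `Ch_n` and `|ν - j| ≤ 1`,
the angles satisfy `d(θ_i) ≤ 5 d(θ_ν)`, and `5 π² n ≤ 4 · 25 n ≤ 4 δ m` closes the estimate.
-/

open Real

lemma uniformP_succ_sub (N k : ℕ) : uniformP N (k + 1) - uniformP N k = 2 / N := by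
  unfold uniformP; push_cast; ring

theorem isRemesh_uniformP {δ : ℝ} {n m : ℕ} (h : (n : ℝ) ≤ δ * m) :
    IsRemesh δ (uniformP n) n (uniformP m) m := by
  intro j hj i hi _ ν _ _ _
  have hn : (0 : ℝ) < n := by exact_mod_cast j.zero_le.trans_lt hj
  have hm : (0 : ℝ) < m := by exact_mod_cast i.zero_le.trans_lt hi
  rw [uniformP_succ_sub, uniformP_succ_sub, mul_div_assoc', div_le_div_iff₀ hm hn]
  linarith

lemma chebP_succ_sub (N k : ℕ) :
    chebP N (k + 1) - chebP N k = 2 * sin ((2 * k + 1) * π / (2 * N)) * sin (π / (2 * N)) := by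
  unfold chebP
  rw [neg_sub_neg, cos_sub_cos,
    show ((k : ℝ) * π / N - ((k + 1 : ℕ) : ℝ) * π / N) / 2 = -(π / (2 * N)) by push_cast; ring,
    sin_neg]
  push_cast
  ring_nf

lemma chebP_lt_chebP_iff {m n i j : ℕ} (hm : 0 < m) (hn : 0 < n) (hi : i ≤ m) (hj : j ≤ n) :
    chebP m i < chebP n j ↔ i * n < j * m := by
  have hm' : (0 : ℝ) < m := by exact_mod_cast hm
  have hn' : (0 : ℝ) < n := by exact_mod_cast hn
  have mem {k N : ℕ} (hN : (0 : ℝ) < N) (hk : k ≤ N) : (k : ℝ) * π / N ∈ Icc 0 π := by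
    refine ⟨by positivity, (div_le_iff₀ hN).2 ?_⟩
    nlinarith [pi_pos, (Nat.cast_le (α := ℝ)).2 hk]
  rw [chebP, chebP, neg_lt_neg_iff, strictAntiOn_cos.lt_iff_gt (mem hn' hj) (mem hm' hi),
    div_lt_div_iff₀ hm' hn', ← Nat.cast_lt (α := ℝ)]
  push_cast
  constructor <;> intro h <;> nlinarith [pi_pos]

lemma sin_le_min_pi_sub {x : ℝ} (h0 : 0 ≤ x) (hπ : x ≤ π) : sin x ≤ min x (π - x) :=
  le_min (sin_le h0) (sin_pi_sub x ▸ sin_le (by linarith))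

lemma two_div_pi_mul_min_pi_sub_le_sin {x : ℝ} (h0 : 0 ≤ x) (hπ : x ≤ π) :
    2 / π * min x (π - x) ≤ sin x := by
  rcases le_total x (π - x) with h | h
  · rw [min_eq_left h]; exact mul_le_sin h0 (by linarith)
  · rw [min_eq_right h, ← sin_pi_sub]; exact mul_le_sin (by linarith) (by linarith)

lemma two_mul_add_one_mul_pi_div_le_pi {N k : ℕ} (hk : k < N) :
    (2 * k + 1) * π / (2 * N) ≤ π := by
  have hk' : (k : ℝ) + 1 ≤ N := by exact_mod_cast hk
  rw [div_le_iff₀ (by linarith)]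
  nlinarith [pi_pos]

lemma pi_div_two_mul_le_pi_div_two {N : ℕ} (hN : 0 < N) : π / (2 * N) ≤ π / 2 := by
  have hN' : (1 : ℝ) ≤ N := by exact_mod_cast hN
  exact div_le_div_of_nonneg_left pi_pos.le two_pos (by linarith)

lemma chebP_succ_sub_le {N k : ℕ} (hk : k < N) :
    chebP N (k + 1) - chebP N k ≤
      π / N * min ((2 * k + 1) * π / (2 * N)) (π - (2 * k + 1) * π / (2 * N)) := by
  have hN := k.zero_le.trans_lt hk
  have hθ := two_mul_add_one_mul_pi_div_le_pi hk
  have hsin_le_min := sin_le_min_pi_sub (by positivity) hθ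
  have hsin_le := sin_le (x := π / (2 * N)) (by positivity)
  have hsin_nonneg := sin_nonneg_of_nonneg_of_le_pi (by positivity)
    ((pi_div_two_mul_le_pi_div_two hN).trans (half_le_self pi_pos.le))
  have hmin_nonneg : 0 ≤ min ((2 * k + 1) * π / (2 * N)) (π - (2 * k + 1) * π / (2 * N)) :=
    le_min (by positivity) (sub_nonneg.2 hθ)
  rw [chebP_succ_sub]
  calc 2 * sin ((2 * k + 1) * π / (2 * N)) * sin (π / (2 * N))
      ≤ 2 * min ((2 * k + 1) * π / (2 * N)) (π - (2 * k + 1) * π / (2 * N)) * (π / (2 * N)) := by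
        gcongr
    _ = _ := by field_simp

lemma le_chebP_succ_sub {N k : ℕ} (hk : k < N) :
    4 / (π * N) * min ((2 * k + 1) * π / (2 * N)) (π - (2 * k + 1) * π / (2 * N)) ≤
      chebP N (k + 1) - chebP N k := by
  have hN := k.zero_le.trans_lt hk
  have hθ := two_mul_add_one_mul_pi_div_le_pi hk
  rw [chebP_succ_sub]
  calc 4 / (π * N) * min ((2 * k + 1) * π / (2 * N)) (π - (2 * k + 1) * π / (2 * N))
      = 2 * (2 / π * min ((2 * k + 1) * π / (2 * N)) (π - (2 * k + 1) * π / (2 * N)))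
          * (2 / π * (π / (2 * N))) := by field_simp; ring
    _ ≤ _ := by
        gcongr
        · exact mul_nonneg zero_le_two (sin_nonneg_of_nonneg_of_le_pi (by positivity) hθ)
        · exact two_div_pi_mul_min_pi_sub_le_sin (by positivity) hθ
        · exact mul_le_sin (by positivity) (pi_div_two_mul_le_pi_div_two hN)

lemma two_mul_add_one_div_le_of_lt {i j ν m n : ℝ} (hn : 0 < n) (hnm : n ≤ m) (hν : 0 ≤ ν)
    (hij : i * n < (j + 1) * m) (hjν : j ≤ ν + 1) :
    (2 * i + 1) / m ≤ 5 * ((2 * ν + 1) / n) := by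
  have hm : 0 < m := hn.trans_le hnm
  rw [mul_div_assoc', div_le_div_iff₀ hm hn]
  nlinarith

/-- Reflecting `i ↦ m - 1 - i`, `j ↦ n - 1 - j`, `ν ↦ n - 1 - ν` swaps the two overlap conditions
and turns each angle `θ` into `π - θ`, so both halves of the minimum follow from the same bound. -/
lemma min_pi_sub_le_five_mul {i j ν m n : ℝ} (hn : 0 < n) (hnm : n ≤ m) (hν : 0 ≤ ν)
    (hνn : ν + 1 ≤ n) (hij : i * n < (j + 1) * m) (hji : j * m < (i + 1) * n)
    (hjν : j ≤ ν + 1) (hνj : ν ≤ j + 1) :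
    min ((2 * i + 1) * π / (2 * m)) (π - (2 * i + 1) * π / (2 * m)) ≤
      5 * min ((2 * ν + 1) * π / (2 * n)) (π - (2 * ν + 1) * π / (2 * n)) := by
  have hm : 0 < m := hn.trans_le hnm
  have angle {k N : ℝ} (hN : 0 < N) : π - (2 * k + 1) * π / (2 * N) =
      (2 * (N - 1 - k) + 1) / N * (π / 2) := by
    field_simp; ring
  rw [mul_min_of_nonneg _ _ (by norm_num : (0 : ℝ) ≤ 5), angle hm, angle hn]
  refine le_min ((min_le_left _ _).trans ?_) ((min_le_right _ _).trans ?_)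
  · have := two_mul_add_one_div_le_of_lt hn hnm hν hij hjν
    calc (2 * i + 1) * π / (2 * m) = (2 * i + 1) / m * (π / 2) := by ring
      _ ≤ 5 * ((2 * ν + 1) / n) * (π / 2) := by gcongr
      _ = 5 * ((2 * ν + 1) * π / (2 * n)) := by ring
  · have := two_mul_add_one_div_le_of_lt (i := m - 1 - i) (j := n - 1 - j) (ν := n - 1 - ν)
      hn hnm (by linarith) (by linarith) (by linarith)
    calc (2 * (m - 1 - i) + 1) / m * (π / 2) ≤ 5 * ((2 * (n - 1 - ν) + 1) / n) * (π / 2) := by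
          gcongr
      _ = 5 * ((2 * (n - 1 - ν) + 1) / n * (π / 2)) := by ring

theorem isRemesh_chebP {δ : ℝ} {n m : ℕ} (hnm : n ≤ m) (h : 25 * (n : ℝ) ≤ δ * m) :
    IsRemesh δ (chebP n) n (chebP m) m := by
  intro j hj i hi ⟨x, ⟨hx_ge, hx_le⟩, hx_gt, hx_lt⟩ ν hjν hνj hνn
  have hn₀ := j.zero_le.trans_lt hj
  have hm₀ := i.zero_le.trans_lt hi
  have hij : i * n < (j + 1) * m :=
    (chebP_lt_chebP_iff hm₀ hn₀ hi.le hj).1 (hx_ge.trans_lt hx_lt)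
  have hji : j * m < (i + 1) * n :=
    (chebP_lt_chebP_iff hn₀ hm₀ hj.le hi).1 (hx_gt.trans_le hx_le)
  have hn : (0 : ℝ) < n := by exact_mod_cast hn₀
  have hm : (0 : ℝ) < m := by exact_mod_cast hm₀
  have hδ : 0 ≤ δ := by nlinarith
  have hangles := min_pi_sub_le_five_mul (i := i) (j := j) (ν := ν) (m := m) hn
    (by exact_mod_cast hnm) ν.cast_nonneg (by exact_mod_cast hνn) (by exact_mod_cast hij)
    (by exact_mod_cast hji) (by exact_mod_cast (by omega : j ≤ ν + 1)) (by exact_mod_cast hνj)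
  set dA := min ((2 * i + 1) * π / (2 * m)) (π - (2 * i + 1) * π / (2 * m))
  set dB := min ((2 * ν + 1) * π / (2 * n)) (π - (2 * ν + 1) * π / (2 * n))
  have hdB : 0 ≤ dB :=
    le_min (by positivity) (sub_nonneg.2 (two_mul_add_one_mul_pi_div_le_pi hνn))
  have hconst : π / m * 5 ≤ δ * (4 / (π * n)) := by
    rw [div_mul_eq_mul_div, mul_div_assoc', div_le_div_iff₀ hm (by positivity)]
    have hπ : π * π ≤ 16 := by nlinarith [pi_pos, pi_le_four]
    nlinarith [mul_le_mul_of_nonneg_right hπ hn.le]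
  calc chebP m (i + 1) - chebP m i ≤ π / m * dA := chebP_succ_sub_le hi
    _ ≤ π / m * 5 * dB := by rw [mul_assoc]; gcongr
    _ ≤ δ * (4 / (π * n)) * dB := by gcongr
    _ ≤ δ * (chebP n (ν + 1) - chebP n ν) := by
        rw [mul_assoc]; gcongr; exact le_chebP_succ_sub hνn

theorem statement19_general (δ : ℝ) (hδ : 0 < δ) (n m : ℕ) :
    ((n : ℝ) / δ ≤ (m : ℝ) → IsRemesh δ (uniformP n) n (uniformP m) m) ∧
    (max (25 / δ) 1 * (n : ℝ) ≤ (m : ℝ) → IsRemesh δ (chebP n) n (chebP m) m) := by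
  refine ⟨fun h => isRemesh_uniformP ?_, fun h => isRemesh_chebP ?_ ?_⟩
  · rwa [div_le_iff₀ hδ, mul_comm] at h
  · exact_mod_cast (le_mul_of_one_le_left n.cast_nonneg (le_max_right _ _)).trans h
  · have h25 := (mul_le_mul_of_nonneg_right (le_max_left _ _) n.cast_nonneg).trans h
    rwa [div_mul_eq_mul_div, div_le_iff₀ hδ, mul_comm (m : ℝ)] at h25

/-- remesh properties of uniform and Chebyshev partitions. -/
theorem statement19 (δ : ℝ) (hδ : 0 < δ) (n m : ℕ) (hn : 1 ≤ n) (hm : 1 ≤ m) :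
    ((n : ℝ) / δ ≤ (m : ℝ) → IsRemesh δ (uniformP n) n (uniformP m) m) ∧
    (max (25 / δ) 1 * (n : ℝ) ≤ (m : ℝ) → IsRemesh δ (chebP n) n (chebP m) m) :=
  statement19_general δ hδ n m
end
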